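/- arXiv:2310.10270 — 4 statements merged into one kernel-verified Lean document; each statement's English description precedes it below -/
import Mathlib

section
/- Let R be a commutative ring of characteristic p > 0, J a nonzero ideal of R generated by μ elements, k a positive natural number, and q = p^n a power of p. Then J^{q(μ+k-1)} ⊆ (J^{[q]})^k ⊆ J^{qk}, where J^{[q]} denotes the ideal generated by the q-th powers of elements of J. -/
open Pointwise


/-- The `q`-th Frobenius power of an ideal: the ideal generated by `q`-th powers
of elements of `J`. -/
def frobPow {R : Type*} [CommRing R] (J : Ideal R) (q : ℕ) : Ideal R :=
  Ideal.span ((fun x => x ^ q) '' (J : Set R))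

lemma prod_mem_pow_sum {R : Type*} [CommRing R] {ι : Type*} (I : Ideal R)
    (t : Finset ι) (x : ι → R) (m : ι → ℕ) (h : ∀ a ∈ t, x a ∈ I ^ m a) :
    (∏ a ∈ t, x a) ∈ I ^ (∑ a ∈ t, m a) := by
  classical
  induction t using Finset.induction_on with
  | empty => simp
  | insert _ _ hnot ih =>
    rename_i a t
    rw [Finset.prod_insert hnot, Finset.sum_insert hnot, pow_add]
    exact Ideal.mul_mem_mul (h a (Finset.mem_insert_self a t))
      (ih fun b hb => h b (Finset.mem_insert_of_mem hb))

/-- Let `R` be a commutative ring of characteristic `p > 0`, `J` a nonzero ideal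
generated by `μ` elements, `k` a positive natural number and `q = p ^ n`.
Then `J ^ (q * (μ + k - 1)) ⊆ (J^{[q]}) ^ k ⊆ J ^ (q * k)`. -/
theorem frobenius_power_sandwich {R : Type*} [CommRing R] (p : ℕ) [Fact p.Prime]
    [CharP R p] (J : Ideal R) (hJ : J ≠ ⊥) (μ k n : ℕ) (hk : 0 < k)
    (hgen : ∃ s : Finset R, s.card = μ ∧ Ideal.span (s : Set R) = J) :
    J ^ (p ^ n * (μ + k - 1)) ≤ frobPow J (p ^ n) ^ k ∧
      frobPow J (p ^ n) ^ k ≤ J ^ (p ^ n * k) := by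
  classical
  set q := p ^ n with hqdef
  have hq : 0 < q := Nat.pow_pos (Fact.out : p.Prime).pos
  obtain ⟨s, hcard, hspan⟩ := hgen
  have hμ : 1 ≤ μ := by
    rcases Nat.eq_zero_or_pos μ with h0 | h1
    · exfalso
      apply hJ
      rw [← hspan]
      rw [Finset.card_eq_zero.mp (hcard.trans h0)]
      simp [Ideal.span_eq_bot]
    · exact h1
  constructor
  · -- first inclusion
    set N := q * (μ + k - 1) with hN
    have hJpow : J ^ N = Ideal.span ((s : Set R) ^ N) := by
      rw [← hspan]
      exact Submodule.span_pow _ _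
    rw [hJpow, Ideal.span_le]
    intro a ha
    rw [Set.mem_pow] at ha
    obtain ⟨f, hf⟩ := ha
    rw [List.prod_ofFn] at hf
    set g : Fin N → R := fun i => (f i : R) with hg
    have hcomp : ∏ i : Fin N, g i
        = ∏ b ∈ Finset.univ.image g, b ^ (Finset.univ.filter fun i => g i = b).card := by
      simpa using Finset.prod_comp (id : R → R) g
    set t := Finset.univ.image g with ht
    set e : R → ℕ := fun b => (Finset.univ.filter fun i => g i = b).card with he
    have hsum : ∑ b ∈ t, e b = N := by
      have := Finset.card_eq_sum_card_image g (Finset.univ : Finset (Fin N))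
      simpa [ht, he] using this.symm
    have hts : t ⊆ s := by
      intro b hb
      rw [ht, Finset.mem_image] at hb
      obtain ⟨i, _, rfl⟩ := hb
      exact (f i).2
    have htcard : t.card ≤ μ := hcard ▸ Finset.card_le_card hts
    -- each b ^ e b lies in frobPow J q ^ (e b / q)
    have hmem : ∀ b ∈ t, b ^ e b ∈ frobPow J q ^ (e b / q) := by
      intro b hb
      have hbJ : b ∈ J := by
        rw [← hspan]
        exact Ideal.subset_span (hts hb)
      have hbq : b ^ q ∈ frobPow J q := Ideal.subset_span ⟨b, hbJ, rfl⟩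
      have hdecomp : b ^ e b = (b ^ q) ^ (e b / q) * b ^ (e b % q) := by
        rw [← pow_mul, ← pow_add, Nat.div_add_mod]
      rw [hdecomp]
      exact Ideal.mul_mem_right _ _ (Ideal.pow_mem_pow hbq _)
    have hprod : ∏ b ∈ t, b ^ e b ∈ frobPow J q ^ (∑ b ∈ t, e b / q) :=
      prod_mem_pow_sum _ t _ _ hmem
    -- pigeonhole: the sum of the quotients is at least k
    have hkS : k ≤ ∑ b ∈ t, e b / q := by
      by_contra hc
      push_neg at hc
      have hS : ∑ b ∈ t, e b / q ≤ k - 1 := by omega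
      have hbound : N ≤ q * (∑ b ∈ t, e b / q) + t.card * (q - 1) := by
        calc N = ∑ b ∈ t, e b := hsum.symm
          _ ≤ ∑ b ∈ t, (q * (e b / q) + (q - 1)) := by
              apply Finset.sum_le_sum
              intro b _
              have := Nat.div_add_mod (e b) q
              have hmod : e b % q ≤ q - 1 := by
                have := Nat.mod_lt (e b) hq
                omega
              omega
          _ = q * (∑ b ∈ t, e b / q) + t.card * (q - 1) := by
              rw [Finset.sum_add_distrib, Finset.mul_sum, Finset.sum_const, smul_eq_mul]
      have h1 : N ≤ q * (k - 1) + μ * (q - 1) :=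
        hbound.trans (Nat.add_le_add (Nat.mul_le_mul_left q hS)
          (Nat.mul_le_mul_right _ htcard))
      have hNval : N = q * μ + q * (k - 1) := by
        rw [hN]
        have : μ + k - 1 = μ + (k - 1) := by omega
        rw [this, Nat.mul_add]
      have hμq : μ * (q - 1) < q * μ := by
        calc μ * (q - 1) < μ * (q - 1) + μ := by omega
          _ = μ * q := by
              have : q - 1 + 1 = q := by omega
              rw [← Nat.mul_succ]; rw [Nat.succ_eq_add_one, this]
          _ = q * μ := Nat.mul_comm _ _
      omega
    have haeq : a = ∏ b ∈ t, b ^ e b := by rw [← hf, hcomp]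
    rw [haeq]
    exact Ideal.pow_le_pow_right hkS hprod
  · -- second inclusion
    have h2 : frobPow J q ≤ J ^ q := by
      rw [frobPow, Ideal.span_le]
      rintro _ ⟨x, hx, rfl⟩
      exact Ideal.pow_mem_pow hx q
    calc frobPow J q ^ k ≤ (J ^ q) ^ k := Ideal.pow_right_mono h2 k
      _ = J ^ (q * k) := by rw [← pow_mul]
end

section
/- Let N ⊆ M be two modules of finite length over a commutative ring R, and let a ∈ R. Then the length of M/aM is at least the length of N/aN. -/
/-- The length of a module: the Krull dimension of its lattice of submodules. -/
noncomputable def mLength (R M : Type*) [CommRing R] [AddCommGroup M] [Module R M] :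
    WithBot ℕ∞ :=
  Order.krullDim (Submodule R M)

section Aux

open Order Submodule

variable {R : Type*} [CommRing R]

/-- ℕ∞-valued length of a module: supremum of lengths of strict chains of submodules. -/
noncomputable def eLen (R X : Type*) [CommRing R] [AddCommGroup X] [Module R X] : ℕ∞ :=
  ⨆ p : LTSeries (Submodule R X), (p.length : ℕ∞)

variable {X Y : Type*} [AddCommGroup X] [Module R X] [AddCommGroup Y] [Module R Y]

instance : Nonempty (LTSeries (Submodule R X)) := ⟨RelSeries.singleton _ ⊥⟩

lemma mLength_eq_eLen : mLength R X = (eLen R X : WithBot ℕ∞) := by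
  rw [mLength, Order.krullDim_eq_iSup_length, eLen,
    WithBot.coe_iSup (OrderTop.bddAbove _)]

lemma length_le_eLen (p : LTSeries (Submodule R X)) : (p.length : ℕ∞) ≤ eLen R X :=
  le_iSup (fun p : LTSeries (Submodule R X) => (p.length : ℕ∞)) p

lemma eLen_le_of_injective (f : X →ₗ[R] Y) (hf : Function.Injective f) :
    eLen R X ≤ eLen R Y :=
  iSup_le fun p =>
    le_iSup_of_le (p.map (Submodule.map f) (Submodule.map_strictMono_of_injective hf)) le_rfl

lemma eLen_congr (e : X ≃ₗ[R] Y) : eLen R X = eLen R Y :=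
  le_antisymm (eLen_le_of_injective e.toLinearMap e.injective)
    (eLen_le_of_injective e.symm.toLinearMap e.symm.injective)

lemma exists_LTSeries_last_top {α : Type*} [PartialOrder α] [OrderTop α] (p : LTSeries α) :
    ∃ q : LTSeries α, q.last = ⊤ ∧ p.length ≤ q.length := by
  by_cases h : p.last = ⊤
  · exact ⟨p, h, le_rfl⟩
  · refine ⟨p.snoc ⊤ (lt_top_iff_ne_top.mpr h), RelSeries.last_snoc _ _ _, ?_⟩
    have : (p.snoc ⊤ (lt_top_iff_ne_top.mpr h)).length = p.length + 0 + 1 := rfl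
    omega

lemma exists_LTSeries_head_bot {α : Type*} [PartialOrder α] [OrderBot α] (p : LTSeries α) :
    ∃ q : LTSeries α, q.head = ⊥ ∧ p.length ≤ q.length := by
  by_cases h : p.head = ⊥
  · exact ⟨p, h, le_rfl⟩
  · refine ⟨p.cons ⊥ (bot_lt_iff_ne_bot.mpr h), RelSeries.head_cons _ _ _, ?_⟩
    have : (p.cons ⊥ (bot_lt_iff_ne_bot.mpr h)).length = 0 + p.length + 1 := rfl
    omega

/-- Superadditivity of length: chains in `S` and in `X⧸S` concatenate. -/
lemma eLen_add_le (S : Submodule R X) : eLen R S + eLen R (X ⧸ S) ≤ eLen R X := by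
  refine ENat.iSup_add_iSup_le fun p q => ?_
  obtain ⟨p', hp't, hp'l⟩ := exists_LTSeries_last_top p
  obtain ⟨q', hq'b, hq'l⟩ := exists_LTSeries_head_bot q
  let P : LTSeries (Submodule R X) :=
    p'.map (Submodule.map S.subtype)
      (Submodule.map_strictMono_of_injective (Submodule.injective_subtype S))
  let Q : LTSeries (Submodule R X) :=
    q'.map (Submodule.comap S.mkQ)
      (Submodule.comap_strictMono_of_surjective (Submodule.mkQ_surjective S))
  have hconn : P.last = Q.head := by
    show Submodule.map S.subtype p'.last = Submodule.comap S.mkQ q'.head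
    rw [hp't, hq'b, Submodule.map_subtype_top, Submodule.comap_bot, Submodule.ker_mkQ]
  refine le_trans ?_ (le_iSup _ (RelSeries.smash P Q hconn))
  have hlen : (RelSeries.smash P Q hconn).length = p'.length + q'.length := rfl
  rw [hlen]
  exact_mod_cast add_le_add hp'l hq'l

/-- Combinatorial lemma: a chain maps to a pair of chains under a jointly strict
pair of monotone maps. -/
lemma exists_chains_of_mono {γ α β : Type*} [Preorder γ] [PartialOrder α] [PartialOrder β]
    (f : γ → α) (g : γ → β) (hf : Monotone f) (hg : Monotone g)
    (hfg : ∀ ⦃x y⦄, x < y → f x = f y → g x < g y) :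
    ∀ p : LTSeries γ, ∃ (A : LTSeries α) (B : LTSeries β),
      A.last = f p.last ∧ B.last = g p.last ∧ p.length ≤ A.length + B.length := by
  suffices H : ∀ (n : ℕ) (p : LTSeries γ), p.length = n →
      ∃ (A : LTSeries α) (B : LTSeries β),
        A.last = f p.last ∧ B.last = g p.last ∧ p.length ≤ A.length + B.length from
    fun p => H p.length p rfl
  intro n
  induction n with
  | zero =>
    intro p hp
    exact ⟨RelSeries.singleton _ (f p.last), RelSeries.singleton _ (g p.last), rfl, rfl,
      by omega⟩
  | succ n ih =>
    intro p hp
    have h0 : p.length ≠ 0 := by omega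
    obtain ⟨A, B, hA, hB, hAB⟩ := ih p.eraseLast (by simp [hp])
    have hel : p.eraseLast.length = p.length - 1 := rfl
    have hlt : p.eraseLast.last < p.last := p.eraseLast_last_rel_last h0
    by_cases hfe : f p.eraseLast.last = f p.last
    · have hg' : B.last < g p.last := by rw [hB]; exact hfg hlt hfe
      refine ⟨A, B.snoc (g p.last) hg', by rw [hA, hfe], RelSeries.last_snoc _ _ _, ?_⟩
      have : (B.snoc (g p.last) hg').length = B.length + 1 := rfl
      omega
    · have hflt : A.last < f p.last := by
        rw [hA]; exact lt_of_le_of_ne (hf hlt.le) hfe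
      have hAl : (A.snoc (f p.last) hflt).length = A.length + 1 := rfl
      rcases (hg hlt.le).lt_or_eq with h | h
      · have hg' : B.last < g p.last := by rw [hB]; exact h
        refine ⟨A.snoc (f p.last) hflt, B.snoc (g p.last) hg',
          RelSeries.last_snoc _ _ _, RelSeries.last_snoc _ _ _, ?_⟩
        have : (B.snoc (g p.last) hg').length = B.length + 1 := rfl
        omega
      · exact ⟨A.snoc (f p.last) hflt, B, RelSeries.last_snoc _ _ _, by rw [hB, h], by omega⟩

/-- Subadditivity of length. -/
lemma eLen_le_add (S : Submodule R X) : eLen R X ≤ eLen R S + eLen R (X ⧸ S) := by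
  refine iSup_le fun p => ?_
  have hfg : ∀ ⦃x y : Submodule R X⦄, x < y →
      Submodule.comap S.subtype x = Submodule.comap S.subtype y →
      Submodule.map S.mkQ x < Submodule.map S.mkQ y := by
    intro x y hxy hfe
    refine lt_of_le_of_ne (Submodule.map_mono hxy.le) fun he => hxy.ne ?_
    have h1 : S ⊓ x = S ⊓ y := by
      rw [← Submodule.map_comap_subtype, ← Submodule.map_comap_subtype, hfe]
    have h2 : S ⊔ x = S ⊔ y := by
      rw [← Submodule.comap_map_mkQ, ← Submodule.comap_map_mkQ, he]
    have h1' : x ⊓ S = y ⊓ S := by rw [inf_comm x S, inf_comm y S]; exact h1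
    have h2' : x ⊔ S = y ⊔ S := by rw [sup_comm x S, sup_comm y S]; exact h2
    exact eq_of_le_of_inf_le_of_sup_le hxy.le h1'.ge h2'.ge
  obtain ⟨A, B, -, -, hAB⟩ := exists_chains_of_mono
    (fun P => Submodule.comap S.subtype P) (fun P => Submodule.map S.mkQ P)
    (fun _ _ h => Submodule.comap_mono h) (fun _ _ h => Submodule.map_mono h) hfg p
  calc (p.length : ℕ∞) ≤ (A.length : ℕ∞) + (B.length : ℕ∞) := by exact_mod_cast hAB
    _ ≤ eLen R S + eLen R (X ⧸ S) := add_le_add (length_le_eLen A) (length_le_eLen B)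

lemma eLen_le_one_of_simple (h : IsSimpleModule R X) : eLen R X ≤ 1 := by
  refine iSup_le fun p => ?_
  by_contra hc
  push_neg at hc
  have hl : 2 ≤ p.length := by exact_mod_cast hc
  have h01 : p ⟨0, by omega⟩ < p ⟨1, by omega⟩ := p.strictMono (by simp [Fin.lt_def])
  have h12 : p ⟨1, by omega⟩ < p ⟨2, by omega⟩ := p.strictMono (by simp [Fin.lt_def])
  haveI := h
  rcases eq_bot_or_eq_top (p ⟨1, by omega⟩) with h1 | h1
  · rw [h1] at h01; exact not_lt_bot h01
  · rw [h1] at h12; exact not_top_lt h12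

lemma eLen_ne_top (h : IsFiniteLength R X) : eLen R X ≠ ⊤ := by
  induction h with
  | of_subsingleton =>
    rename_i M' _ _ _
    have hle : eLen R M' ≤ 0 := by
      refine iSup_le fun p => ?_
      have hp : p.length = 0 := by
        by_contra h0
        have : p.toFun (Fin.castSucc ⟨0, by omega⟩) < p.toFun (Fin.succ ⟨0, by omega⟩) :=
          p.step ⟨0, by omega⟩
        exact this.ne (Subsingleton.elim _ _)
      simp [hp]
    intro ht
    rw [ht] at hle
    exact (by simp : (⊤ : ℕ∞) ≠ 0) (le_antisymm hle (by simp))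
  | of_simple_quotient =>
    rename_i M' _ _ S hs _ ih
    have h1 : eLen R M' ≤ eLen R S + eLen R (M' ⧸ S) := eLen_le_add S
    have h2 : eLen R S + eLen R (M' ⧸ S) < ⊤ := by
      apply WithTop.add_lt_top.mpr
      exact ⟨ih.lt_top, (eLen_le_one_of_simple hs).trans_lt (by exact_mod_cast WithTop.coe_lt_top (1 : ℕ))⟩
    exact (h1.trans_lt h2).ne

lemma isFiniteLength_submodule (h : IsFiniteLength R X) (S : Submodule R X) :
    IsFiniteLength R S := by
  rw [isFiniteLength_iff_isNoetherian_isArtinian] at h ⊢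
  obtain ⟨h1, h2⟩ := h
  exact ⟨inferInstance, inferInstance⟩

lemma range_lsmul_eq (a : R) :
    LinearMap.range (LinearMap.lsmul R X a) = Ideal.span {a} • (⊤ : Submodule R X) := by
  apply le_antisymm
  · rintro x ⟨m, rfl⟩
    exact Submodule.smul_mem_smul (Ideal.mem_span_singleton_self a) trivial
  · rw [Submodule.smul_le]
    intro r hr n _
    obtain ⟨c, rfl⟩ := Ideal.mem_span_singleton'.mp hr
    exact ⟨c • n, by rw [LinearMap.lsmul_apply, smul_smul, mul_comm]⟩

/-- Herbrand-type equality: for a finite length module,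
`l(X/aX) = l(ker (a • · : X → X))`. -/
lemma eLen_quot_eq_eLen_ker (h : IsFiniteLength R X) (a : R) :
    eLen R (X ⧸ Ideal.span {a} • (⊤ : Submodule R X))
      = eLen R (LinearMap.ker (LinearMap.lsmul R X a)) := by
  set f := LinearMap.lsmul R X a with hf
  set K := LinearMap.ker f
  set Rg := LinearMap.range f with hRg
  have hQ : eLen R (X ⧸ K) = eLen R Rg := eLen_congr f.quotKerEquivRange
  have h1 : eLen R K + eLen R Rg ≤ eLen R X := by
    have := eLen_add_le K
    rwa [hQ] at this
  have h2 : eLen R X ≤ eLen R Rg + eLen R (X ⧸ Rg) := eLen_le_add Rg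
  have h3 : eLen R Rg + eLen R (X ⧸ Rg) ≤ eLen R X := eLen_add_le Rg
  have h4 : eLen R X ≤ eLen R K + eLen R Rg := by
    have := eLen_le_add K
    rwa [hQ] at this
  have hRfin : eLen R Rg ≠ ⊤ := eLen_ne_top (isFiniteLength_submodule h Rg)
  have e1 : eLen R K + eLen R Rg = eLen R X := le_antisymm h1 h4
  have e2 : eLen R Rg + eLen R (X ⧸ Rg) = eLen R X := le_antisymm h3 h2
  have heq : eLen R (X ⧸ Rg) + eLen R Rg = eLen R K + eLen R Rg := by
    rw [add_comm (eLen R (X ⧸ Rg)), e2, e1]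
  have heq' : eLen R (X ⧸ Rg) = eLen R K := WithTop.add_right_cancel hRfin heq
  have hfix : Ideal.span {a} • (⊤ : Submodule R X) = Rg := (range_lsmul_eq a).symm
  rw [hfix, heq']

end Aux

/-- Let `N ⊆ M` be two modules of finite length over a commutative ring `R` and
`a ∈ R`.  Then `l(M/aM) ≥ l(N/aN)`. -/
theorem length_quotient_smul_mono {R M : Type*} [CommRing R] [AddCommGroup M]
    [Module R M] (N : Submodule R M) (hM : IsFiniteLength R M) (a : R) :
    mLength R (↥N ⧸ (Ideal.span {a} • (⊤ : Submodule R ↥N)))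
      ≤ mLength R (M ⧸ (Ideal.span {a} • (⊤ : Submodule R M))) := by
  have hN : IsFiniteLength R ↥N := isFiniteLength_submodule hM N
  rw [mLength_eq_eLen, mLength_eq_eLen, WithBot.coe_le_coe]
  rw [eLen_quot_eq_eLen_ker hN a, eLen_quot_eq_eLen_ker hM a]
  -- inclusion of kernels
  set kN := LinearMap.ker (LinearMap.lsmul R ↥N a)
  set kM := LinearMap.ker (LinearMap.lsmul R M a)
  let j : ↥kN →ₗ[R] M := N.subtype ∘ₗ kN.subtype
  have hj : ∀ x : ↥kN, j x ∈ kM := by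
    intro x
    have hx : a • (x : ↥N) = 0 := x.2
    show a • ((x : ↥N) : M) = 0
    rw [← Submodule.coe_smul, hx, Submodule.coe_zero]
  have hjinj : Function.Injective j := by
    simp only [j, LinearMap.coe_comp]
    exact (Submodule.injective_subtype N).comp (Submodule.injective_subtype kN)
  refine eLen_le_of_injective (j.codRestrict kM hj) ?_
  rw [← LinearMap.ker_eq_bot, LinearMap.ker_codRestrict, LinearMap.ker_eq_bot]
  exact hjinj
end

section
/- Let (R, 𝔪) be a noetherian local ring of prime characteristic p, I, J ideals with I ⊆ √J. Define r(n) = max{t ∈ ℕ : I^t ⊄ (J^{[p^n]})^*}, where (−)^* denotes tight closure. Then r(n+1) ≥ p·r(n) for all n; consequently the sequence r(n)/p^n is nondecreasing and (being bounded above) converges to a real number. -/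
open Filter Pointwise

/-- The tight closure of an ideal `A` in a ring of characteristic `p`:
generated by the elements `x` for which there is a `c` outside every minimal
prime with `c x^{pᵉ} ∈ A^{[pᵉ]}` for all large `e`. -/
def tightClosure {R : Type*} [CommRing R] (p : ℕ) (A : Ideal R) : Ideal R :=
  Ideal.span {x : R | ∃ c : R, (∀ P ∈ minimalPrimes R, c ∉ P) ∧
    ∀ᶠ e in atTop, c * x ^ p ^ e ∈ frobPow A (p ^ e)}

section Aux
variable {R : Type*} [CommRing R] (p : ℕ) [Fact p.Prime] [CharP R p]

theorem frobPow_eq_map (A : Ideal R) (e : ℕ) :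
    frobPow A (p ^ e) = A.map (iterateFrobenius R p e) := by
  rfl

theorem frobPow_frobPow (A : Ideal R) (a b : ℕ) :
    frobPow (frobPow A (p ^ a)) (p ^ b) = frobPow A (p ^ (a + b)) := by
  rw [frobPow_eq_map, frobPow_eq_map, frobPow_eq_map, Ideal.map_map,
    add_comm a b, iterateFrobenius_add]

/-- The set of tight closure candidates, as an ideal. -/
def tcIdeal (A : Ideal R) : Ideal R where
  carrier := {x : R | ∃ c : R, (∀ P ∈ minimalPrimes R, c ∉ P) ∧
    ∀ᶠ e in atTop, c * x ^ p ^ e ∈ frobPow A (p ^ e)}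
  zero_mem' := by
    refine ⟨1, fun P hP => ?_, Eventually.of_forall fun e => ?_⟩
    · exact (Ideal.ne_top_iff_one P).mp hP.1.1.ne_top
    · have hp : p ^ e ≠ 0 := pow_ne_zero e (Fact.out (p := p.Prime)).ne_zero
      simp [zero_pow hp]
  add_mem' := by
    rintro x y ⟨c, hc, hce⟩ ⟨d, hd, hde⟩
    refine ⟨c * d, fun P hP => ?_, ?_⟩
    · intro h
      rcases hP.1.1.mem_or_mem h with h | h
      exacts [hc P hP h, hd P hP h]
    · filter_upwards [hce, hde] with e h1 h2
      have : (x + y) ^ p ^ e = x ^ p ^ e + y ^ p ^ e := add_pow_char_pow ..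
      have heq : c * d * (x ^ p ^ e + y ^ p ^ e)
          = d * (c * x ^ p ^ e) + c * (d * y ^ p ^ e) := by ring
      rw [this, heq]
      exact Ideal.add_mem _ (Ideal.mul_mem_left _ d h1) (Ideal.mul_mem_left _ c h2)
  smul_mem' := by
    rintro s x ⟨c, hc, hce⟩
    refine ⟨c, hc, ?_⟩
    filter_upwards [hce] with e h1
    have : c * (s • x) ^ p ^ e = s ^ p ^ e * (c * x ^ p ^ e) := by
      simp [smul_eq_mul, mul_pow]; ring
    rw [this]
    exact Ideal.mul_mem_left _ _ h1

theorem mem_tightClosure_iff (A : Ideal R) (x : R) :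
    x ∈ tightClosure p A ↔ ∃ c : R, (∀ P ∈ minimalPrimes R, c ∉ P) ∧
      ∀ᶠ e in atTop, c * x ^ p ^ e ∈ frobPow A (p ^ e) := by
  constructor
  · intro hx
    have : tightClosure p A ≤ tcIdeal p A := Ideal.span_le.mpr fun y hy => hy
    exact this hx
  · intro h
    exact Ideal.subset_span h

theorem le_tightClosure (A : Ideal R) : A ≤ tightClosure p A := by
  intro x hx
  refine (mem_tightClosure_iff p A x).mpr ⟨1, fun P hP => ?_, Eventually.of_forall fun e => ?_⟩
  · exact (Ideal.ne_top_iff_one P).mp hP.1.1.ne_top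
  · rw [one_mul]
    exact Ideal.subset_span ⟨x, hx, rfl⟩

/-- pigeonhole containment: `J^(μ q + 1) ≤ J^{[q]}` if `J` has `μ` generators. -/
theorem pow_le_frobPow (J : Ideal R) [DecidableEq R] (t : Finset R) (hspan : Ideal.span (t : Set R) = J)
    (q : ℕ) (hq : 1 ≤ q) : J ^ (t.card * q + 1) ≤ frobPow J q := by
  set N := t.card * q + 1
  have : J ^ N = Ideal.span ((t : Set R) ^ N) := by
    rw [← hspan, Ideal.span, Submodule.span_pow]
  rw [this, Ideal.span_le]
  rintro a ha
  obtain ⟨f, hf⟩ := Set.mem_pow.mp ha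
  have hfa : (List.ofFn fun i => (f i : R)).prod = a := hf
  have hprod : ∏ i : Fin N, (f i : R) = a := by rw [← hfa, List.prod_ofFn]
  -- pigeonhole
  have hmaps : ∀ i ∈ Finset.univ, (f i : R) ∈ t := fun i _ => (f i).2
  have hcard : t.card * (q - 1) < (Finset.univ : Finset (Fin N)).card := by
    simp only [Finset.card_univ, Fintype.card_fin]
    calc t.card * (q - 1) ≤ t.card * q := Nat.mul_le_mul_left _ (Nat.sub_le _ _)
      _ < N := Nat.lt_succ_self _
  obtain ⟨y, hyt, hy⟩ :=
    Finset.exists_lt_card_fiber_of_mul_lt_card_of_maps_to hmaps hcard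
  have hqle : q ≤ ({i ∈ Finset.univ | (f i : R) = y} : Finset (Fin N)).card := by omega
  set s : Finset (Fin N) := {i ∈ Finset.univ | (f i : R) = y}
  have hsplit : (∏ i ∈ s, (f i : R)) * ∏ i ∈ Finset.univ \ s, (f i : R) = a := by
    rw [mul_comm, Finset.prod_sdiff (Finset.filter_subset _ _), hprod]
  have hs : ∏ i ∈ s, (f i : R) = y ^ s.card := by
    rw [Finset.prod_congr rfl fun i hi => (Finset.mem_filter.mp hi).2, Finset.prod_const]
  have hyJ : y ∈ J := by
    rw [← hspan]; exact Ideal.subset_span hyt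
  have : a = y ^ q * (y ^ (s.card - q) * ∏ i ∈ Finset.univ \ s, (f i : R)) := by
    rw [← hsplit, hs, ← mul_assoc, ← pow_add, Nat.add_sub_cancel' hqle]
  rw [this]
  exact Ideal.mul_mem_right _ _ (Ideal.subset_span ⟨y, hyJ, rfl⟩)

end Aux
/-- For ideals `I ⊆ √J` in a noetherian local ring of characteristic `p`, with
`r(n) = max{t : I^t ⊄ (J^{[pⁿ]})^*}`, one has `r(n+1) ≥ p·r(n)`; consequently
`r(n)/pⁿ` is nondecreasing and converges to a real number. -/
theorem fThreshold_upto_tightClosure {R : Type*} [CommRing R] [IsNoetherianRing R]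
    [IsLocalRing R] (p : ℕ) [Fact p.Prime] [CharP R p] (I J : Ideal R)
    (hIJ : I ≤ J.radical) (r : ℕ → ℕ)
    (hr : ∀ n, IsGreatest {t : ℕ | ¬ I ^ t ≤ tightClosure p (frobPow J (p ^ n))} (r n)) :
    (∀ n, p * r n ≤ r (n + 1)) ∧
      Monotone (fun n => (r n : ℝ) / (p : ℝ) ^ n) ∧
      ∃ L : ℝ, Tendsto (fun n => (r n : ℝ) / (p : ℝ) ^ n) atTop (nhds L) := by
  classical
  have hp1 : 1 < p := (Fact.out : p.Prime).one_lt
  -- Key step: r(n+1) ≥ p r(n)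
  have key : ∀ n, p * r n ≤ r (n + 1) := by
    intro n
    obtain ⟨x, hxI, hxT⟩ := SetLike.not_le_iff_exists.mp (hr n).1
    refine (hr (n + 1)).2 ?_
    intro hle
    have hxp : x ^ p ∈ I ^ (p * r n) := by
      rw [mul_comm, pow_mul]; exact Ideal.pow_mem_pow hxI p
    obtain ⟨c, hc, hce⟩ := (mem_tightClosure_iff p _ _).mp (hle hxp)
    apply hxT
    refine (mem_tightClosure_iff p _ _).mpr ⟨c, hc, ?_⟩
    rw [eventually_atTop] at hce ⊢
    obtain ⟨N, hN⟩ := hce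
    refine ⟨N + 1, fun e he => ?_⟩
    have h1 := hN (e - 1) (by omega)
    rw [frobPow_frobPow] at h1
    have hxe : (x ^ p) ^ p ^ (e - 1) = x ^ p ^ e := by
      rw [← pow_mul, ← pow_succ']
      congr 1
      congr 1
      omega
    rw [hxe] at h1
    rw [frobPow_frobPow]
    have : n + 1 + (e - 1) = n + e := by omega
    rwa [this] at h1
  -- Monotonicity of r(n)/pⁿ
  have hppos : (0 : ℝ) < (p : ℝ) := Nat.cast_pos.mpr (by omega)
  have mono : Monotone (fun n => (r n : ℝ) / (p : ℝ) ^ n) := by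
    apply monotone_nat_of_le_succ
    intro n
    have hcast : (p : ℝ) * (r n : ℝ) ≤ (r (n + 1) : ℝ) := by exact_mod_cast key n
    rw [div_le_div_iff₀ (pow_pos hppos n) (pow_pos hppos (n + 1))]
    have hps : (p : ℝ) ^ (n + 1) = (p : ℝ) ^ n * p := pow_succ _ _
    nlinarith [pow_pos hppos n]
  -- Boundedness
  obtain ⟨t, hspan⟩ := IsNoetherian.noetherian J
  obtain ⟨k₀, hk₀⟩ :=
    Ideal.exists_pow_le_of_le_radical_of_fg_radical hIJ (IsNoetherian.noetherian _)
  set k := k₀ + 1 with hkdef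
  have hk : I ^ k ≤ J := le_trans (Ideal.pow_le_pow_right (Nat.le_succ _)) hk₀
  have hbound : ∀ n, r n ≤ k * ((t.card + 1) * p ^ n) := by
    intro n
    have hpn : 1 ≤ p ^ n := Nat.one_le_pow _ _ (by omega)
    have hlt : ¬ (k * (t.card * p ^ n + 1) ≤ r n) := by
      intro h
      apply (hr n).1
      calc I ^ r n ≤ I ^ (k * (t.card * p ^ n + 1)) := Ideal.pow_le_pow_right h
        _ = (I ^ k) ^ (t.card * p ^ n + 1) := by rw [← pow_mul]
        _ ≤ J ^ (t.card * p ^ n + 1) := Ideal.pow_right_mono hk _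
        _ ≤ frobPow J (p ^ n) := pow_le_frobPow J t hspan _ hpn
        _ ≤ tightClosure p (frobPow J (p ^ n)) := le_tightClosure p _
    have h1 : r n ≤ k * (t.card * p ^ n + 1) := by omega
    calc r n ≤ k * (t.card * p ^ n + 1) := h1
      _ ≤ k * ((t.card + 1) * p ^ n) := by
          apply Nat.mul_le_mul_left
          nlinarith
  have hbdd : BddAbove (Set.range fun n => (r n : ℝ) / (p : ℝ) ^ n) := by
    refine ⟨(k : ℝ) * (t.card + 1), ?_⟩
    rintro _ ⟨n, rfl⟩
    have hpn : (0 : ℝ) < (p : ℝ) ^ n := pow_pos hppos n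
    rw [div_le_iff₀ hpn]
    have : (r n : ℝ) ≤ (k : ℝ) * ((t.card : ℝ) + 1) * (p : ℝ) ^ n := by
      have := hbound n
      push_cast
      exact_mod_cast Nat.cast_le.mpr this |>.trans_eq (by push_cast; ring)
    exact this
  exact ⟨key, mono, ⟨_, tendsto_atTop_ciSup mono hbdd⟩⟩
end

section
/- Let d ≥ 2 be an integer. Then for all sufficiently large integers t, the binomial coefficient C(t+d−1, d) is strictly greater than ((t+d−1)/d)^d. Consequently, for R a regular local ring of dimension d ≥ 2 (localization of a polynomial ring in d variables over a field of characteristic p at the maximal ideal), J = 𝔪^t and I = 𝔪, one has e_HK(J, R) = C(t+d−1, d) > (c^J(I)/d)^d = ((t+d−1)/d)^d · e_HK(J·R/I, R/I), disproving the Betancourt–Smirnov conjecture as stated. -/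
open Finset in
lemma key_nat (d n : ℕ) (hd : 2 ≤ d) (hn : d < n) :
    n ^ d * d.factorial < n.descFactorial d * d ^ d := by
  have h1 : ∏ i ∈ range d, (n * (d - i)) < ∏ i ∈ range d, ((n - i) * d) := by
    apply Finset.prod_lt_prod
    · intro i hi
      simp only [mem_range] at hi
      exact Nat.mul_pos (by omega) (by omega)
    · intro i hi
      simp only [mem_range] at hi
      have hin : i ≤ n := by omega
      have hid : i ≤ d := by omega
      zify [hid, hin]
      nlinarith [hn, hi]
    · refine ⟨1, mem_range.mpr (by omega), ?_⟩
      have h11 : (1:ℕ) ≤ n := by omega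
      have h12 : (1:ℕ) ≤ d := by omega
      zify [h11, h12]
      nlinarith
  have hfac : ∏ i ∈ range d, (d - i) = d.factorial := by
    have := Finset.prod_range_reflect (fun i => i + 1) d
    rw [← Finset.prod_range_add_one_eq_factorial]
    rw [← this]
    apply Finset.prod_congr rfl
    intro j hj
    simp only [mem_range] at hj
    omega
  calc n ^ d * d.factorial = ∏ i ∈ range d, (n * (d - i)) := by
        rw [Finset.prod_mul_distrib, Finset.prod_const, hfac, card_range]
    _ < ∏ i ∈ range d, ((n - i) * d) := h1
    _ = n.descFactorial d * d ^ d := by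
        rw [Finset.prod_mul_distrib, Finset.prod_const, Nat.descFactorial_eq_prod_range,
          card_range]

/-- For `d ≥ 2`, for all sufficiently large `t` one has
`C(t+d−1, d) > ((t+d−1)/d)^d`.  Consequently, for a regular local ring of
dimension `d ≥ 2` with `J = 𝔪^t` and `I = 𝔪`, where
`e_HK(J,R) = C(t+d−1,d)`, `c^J(I) = t+d−1` and `e_HK(J·R/I, R/I) = 1`, one has
`e_HK(J,R) > (c^J(I)/d)^d · e_HK(J·R/I, R/I)`, disproving the
Betancourt–Smirnov conjecture as stated. -/
theorem choose_gt_pow_of_large (d : ℕ) (hd : 2 ≤ d) :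
    ∃ T : ℕ, ∀ t ≥ T,
      (((t + d - 1).choose d : ℝ) > (((t : ℝ) + d - 1) / d) ^ d) ∧
        ∀ eHK cJ eHKq : ℝ,
          eHK = ((t + d - 1).choose d : ℝ) → cJ = (t : ℝ) + d - 1 → eHKq = 1 →
            eHK > (cJ / d) ^ d * eHKq := by
  refine ⟨2, fun t ht => ?_⟩
  set n := t + d - 1 with hn
  have hdn : d < n := by omega
  have key := key_nat d n hd hdn
  rw [Nat.descFactorial_eq_factorial_mul_choose] at key
  have key2 : n ^ d < n.choose d * d ^ d := by
    have : n ^ d * d.factorial < n.choose d * d ^ d * d.factorial := by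
      calc n ^ d * d.factorial < d.factorial * n.choose d * d ^ d := key
        _ = n.choose d * d ^ d * d.factorial := by ring
    exact Nat.lt_of_mul_lt_mul_right this
  have hdr : (0:ℝ) < (d:ℝ) ^ d := by positivity
  have hcast : ((t:ℝ) + d - 1) = (n:ℝ) := by
    rw [hn]; push_cast [show 1 ≤ t + d by omega]; ring
  have main : ((n.choose d : ℝ)) > ((n:ℝ) / d) ^ d := by
    rw [div_pow, gt_iff_lt, div_lt_iff₀ hdr]
    exact_mod_cast key2
  refine ⟨by rw [hcast]; exact main, ?_⟩
  rintro eHK cJ eHKq rfl rfl rfl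
  rw [mul_one, hcast]
  exact main
end
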